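/- Let f(t,x) = x³ + a₂(t)x² + a₃(t)x + a₄(t) ∈ ℂ[t,x] with deg a₂ = 2, deg a₃ = 3, and deg a₄ ≤ 3. Let x₀, y₀ ∈ ℂ[t] satisfy y₀² = f(t, x₀). For r ∈ ℂ(t)^× and s ∈ ℂ(t), set v = r(x − x₀)(x − s) − y₀, and suppose v² − f = r²(x − x₀)·u where u = x³ + c₁(t)x² + c₂(t)x + c₃(t) with c_i ∈ ℂ(t). If u is a polynomial in ℂ[t,x] of total degree 3, then r ∈ ℂ^× and s ∈ ℂ[t] with deg s ≤ 1. -/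

import Mathlib

open Polynomial

/-!
Write `v = r (X² - p X + e)` with `p = x₀ + s` and `e = x₀ s - y₀ / r`. Dividing the hypothesis
by `r²` gives `(X² - p X + e)² = r⁻² f + (X - x₀) u`, whose coefficients express `r⁻²` and `2e`
through `p` and make `p` a root of a monic cubic over `ℂ[t]`. As `ℂ[t]` is integrally closed,
`p`, `r⁻²` and `2e` are polynomials in `t`. Comparing `t`-degrees in the coefficient identities
then forces `r⁻²` to be constant and `deg p ≤ 1`, hence `deg s ≤ 1`.
-/

section QuarticCoeffRelations

variable {S : Type*} [CommRing S]

/-- The coefficients of `X³, X², X, 1` in `(X² - P X + M / 2)² = W f + (X - x₀) u`, where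
`f = X³ + a₂ X² + a₃ X + a₄` and `u = X³ + c₁ X² + c₂ X + c₃`. -/
def QuarticCoeffRelations (x₀ a₂ a₃ a₄ c₁ c₂ c₃ P W M : S) : Prop :=
  x₀ = 2 * P + W + c₁ ∧ M + P ^ 2 = W * a₂ + c₂ - x₀ * c₁ ∧
    P * M = x₀ * c₂ - c₃ - W * a₃ ∧ M ^ 2 = 4 * (W * a₄ - x₀ * c₃)

theorem quarticCoeffRelations_map_iff {T : Type*} [CommRing T] {φ : S →+* T}
    (hφ : Function.Injective φ) {x₀ a₂ a₃ a₄ c₁ c₂ c₃ P W M : S} :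
    QuarticCoeffRelations (φ x₀) (φ a₂) (φ a₃) (φ a₄) (φ c₁) (φ c₂) (φ c₃) (φ P) (φ W) (φ M) ↔
      QuarticCoeffRelations x₀ a₂ a₃ a₄ c₁ c₂ c₃ P W M := by
  simp only [QuarticCoeffRelations, ← map_ofNat φ, ← map_add, ← map_mul, ← map_pow, ← map_sub,
    hφ.eq_iff]

end QuarticCoeffRelations

theorem quarticCoeffRelations_of_sq_sub_eq {K : Type*} [Field K]
    {r x₀ y₀ s a₂ a₃ a₄ c₁ c₂ c₃ : K} (hr : r ≠ 0)
    (h : (C r * (X - C x₀) * (X - C s) - C y₀) ^ 2 - (X ^ 3 + C a₂ * X ^ 2 + C a₃ * X + C a₄) =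
      C r ^ 2 * (X - C x₀) * (X ^ 3 + C c₁ * X ^ 2 + C c₂ * X + C c₃)) :
    QuarticCoeffRelations x₀ a₂ a₃ a₄ c₁ c₂ c₃ (x₀ + s) (r⁻¹ ^ 2) (2 * (x₀ * s - y₀ / r)) := by
  have h₃ := congrArg (coeff · 3) h
  have h₂ := congrArg (coeff · 2) h
  have h₁ := congrArg (coeff · 1) h
  have h₀ := congrArg (coeff · 0) h
  simp only [mul_sub, sub_mul, pow_two, mul_add, coeff_add, coeff_sub, coeff_C_mul, coeff_mul_C,
    ← C_mul, mul_assoc, ← pow_succ', coeff_X_pow, coeff_X, coeff_C] at h₃ h₂ h₁ h₀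
  norm_num [coeff_X] at h₃ h₂ h₁ h₀
  refine ⟨?_, ?_, ?_, ?_⟩ <;> field_simp
  · linear_combination h₃
  · linear_combination h₂
  · linear_combination -h₁
  · linear_combination 4 * h₀

theorem QuarticCoeffRelations.exists_eq_algebraMap {R K : Type*} [CommRing R] [IsDomain R]
    [IsIntegrallyClosed R] [Field K] [Algebra R K] [IsFractionRing R K]
    {x₀ a₂ a₃ a₄ c₁ c₂ c₃ : R} {P W M : K}
    (h : QuarticCoeffRelations (algebraMap R K x₀) (algebraMap R K a₂) (algebraMap R K a₃)
      (algebraMap R K a₄) (algebraMap R K c₁) (algebraMap R K c₂) (algebraMap R K c₃) P W M) :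
    ∃ P' W' M' : R, algebraMap R K P' = P ∧ algebraMap R K W' = W ∧ algebraMap R K M' = M ∧
      QuarticCoeffRelations x₀ a₂ a₃ a₄ c₁ c₂ c₃ P' W' M' := by
  obtain ⟨h₁, h₂, h₃, -⟩ := id h
  -- eliminate `W` by the first relation and `M` by the second, then substitute into the third
  have hP : IsIntegral R P := by
    refine ⟨X ^ 3 + C (2 * a₂) * X ^ 2 + C (2 * a₃ - (x₀ - c₁) * a₂ - c₂ + x₀ * c₁) * X
      + C (x₀ * c₂ - c₃ - (x₀ - c₁) * a₃), by monicity!, ?_⟩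
    simp only [eval₂_add, eval₂_sub, eval₂_mul, eval₂_pow, eval₂_X, eval₂_C, eval₂_ofNat,
      map_add, map_sub, map_mul, map_ofNat]
    linear_combination P * h₂ - h₃ - (P * algebraMap R K a₂ + algebraMap R K a₃) * h₁
  obtain ⟨P, rfl⟩ := IsIntegrallyClosed.isIntegral_iff.mp hP
  have hW : algebraMap R K (x₀ - 2 * P - c₁) = W := by
    simp only [map_sub, map_mul, map_ofNat]
    linear_combination h₁
  have hM : algebraMap R K ((x₀ - 2 * P - c₁) * a₂ + c₂ - x₀ * c₁ - P ^ 2) = M := by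
    simp only [map_sub, map_add, map_mul, map_pow, hW]
    linear_combination -h₂
  refine ⟨P, _, _, rfl, hW, hM, ?_⟩
  rwa [← quarticCoeffRelations_map_iff (IsFractionRing.injective R K), hW, hM]

section Degree

variable {k : Type*} [CommRing k] {x₀ a₂ a₃ a₄ d₁ d₂ d₃ P W M : k[X]}

theorem natDegree_le_of_eq_two_mul_add {N : ℕ} (h : x₀ = 2 * P + W + d₁)
    (hP : P.natDegree ≤ N) (hW : W.natDegree ≤ N) (hd₁ : d₁.natDegree ≤ 1) (hN : 1 ≤ N) :
    x₀.natDegree ≤ N := by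
  rw [h]
  refine natDegree_add_le_of_degree_le (natDegree_add_le_of_degree_le ?_ hW) (hd₁.trans hN)
  exact (natDegree_mul_le_of_le (natDegree_ofNat 2).le hP).trans (by omega)

theorem natDegree_mul_add_sub_mul_le {N : ℕ} (hW : W.natDegree + 2 ≤ N)
    (hx₀ : x₀.natDegree + 1 ≤ N) (ha₂ : a₂.natDegree ≤ 2) (hd₁ : d₁.natDegree ≤ 1)
    (hd₂ : d₂.natDegree ≤ 2) (hN : 2 ≤ N) : (W * a₂ + d₂ - x₀ * d₁).natDegree ≤ N :=
  (natDegree_sub_le_of_le (natDegree_add_le_of_degree_le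
    ((natDegree_mul_le_of_le le_rfl ha₂).trans hW) (hd₂.trans hN))
    ((natDegree_mul_le_of_le le_rfl hd₁).trans hx₀)).trans (max_le le_rfl le_rfl)

variable [NoZeroDivisors k]

theorem two_mul_natDegree_le_of_sq_eq {N : ℕ} (h : M ^ 2 = 4 * (W * a₄ - x₀ * d₃))
    (ha₄ : a₄.natDegree ≤ 3) (hd₃ : d₃.natDegree ≤ 3) (hW : W.natDegree ≤ N)
    (hx₀ : x₀.natDegree ≤ N) : 2 * M.natDegree ≤ N + 3 := by
  rw [← natDegree_pow, h]
  refine (natDegree_mul_le_of_le (natDegree_ofNat 4).le (natDegree_sub_le_of_le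
    (natDegree_mul_le_of_le hW ha₄) (natDegree_mul_le_of_le hx₀ hd₃))).trans ?_
  omega

theorem QuarticCoeffRelations.natDegree_le_one_of_lt
    (h : QuarticCoeffRelations x₀ a₂ a₃ a₄ d₁ d₂ d₃ P W M)
    (ha₂ : a₂.natDegree ≤ 2) (ha₄ : a₄.natDegree ≤ 3) (hd₁ : d₁.natDegree ≤ 1)
    (hd₂ : d₂.natDegree ≤ 2) (hd₃ : d₃.natDegree ≤ 3) (hWP : W.natDegree < P.natDegree) :
    P.natDegree ≤ 1 := by
  obtain ⟨h₁, h₂, -, h₄⟩ := h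
  by_contra! hP
  have hx₀ := natDegree_le_of_eq_two_mul_add h₁ le_rfl hWP.le hd₁ hP.le
  have hrhs : (W * a₂ + d₂ - x₀ * d₁).natDegree ≤ P.natDegree + 1 :=
    natDegree_mul_add_sub_mul_le (by omega) (by omega) ha₂ hd₁ hd₂ (by omega)
  have hM : M.natDegree = 2 * P.natDegree := by
    rw [eq_sub_of_add_eq h₂, natDegree_sub_eq_right_of_natDegree_lt
      (by rw [natDegree_pow]; omega), natDegree_pow]
  have := two_mul_natDegree_le_of_sq_eq h₄ ha₄ hd₃ hWP.le hx₀
  omega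

theorem QuarticCoeffRelations.natDegree_eq_zero_of_le
    (h : QuarticCoeffRelations x₀ a₂ a₃ a₄ d₁ d₂ d₃ P W M)
    (ha₂ : a₂.natDegree ≤ 2) (ha₃ : a₃.natDegree = 3) (ha₄ : a₄.natDegree ≤ 3)
    (hd₁ : d₁.natDegree ≤ 1) (hd₂ : d₂.natDegree ≤ 2) (hd₃ : d₃.natDegree ≤ 3) (hW : W ≠ 0)
    (hPW : P.natDegree ≤ W.natDegree) : W.natDegree = 0 := by
  obtain ⟨h₁, h₂, h₃, h₄⟩ := h
  by_contra! hW₀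
  have hx₀ := natDegree_le_of_eq_two_mul_add h₁ hPW le_rfl hd₁ (by omega)
  have ha₃₀ : a₃ ≠ 0 := by rintro rfl; simp at ha₃
  have hlead : (W * a₃).natDegree = W.natDegree + 3 := by rw [natDegree_mul hW ha₃₀, ha₃]
  have hlow : (x₀ * d₂ - d₃).natDegree < (W * a₃).natDegree := by
    rw [hlead]
    exact (natDegree_sub_le_of_le (natDegree_mul_le_of_le hx₀ hd₂) hd₃).trans_lt (by omega)
  have hPM : (P * M).natDegree = W.natDegree + 3 := by
    rw [h₃, natDegree_sub_eq_right_of_natDegree_lt hlow, hlead]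
  obtain ⟨hP₀, hM₀⟩ :=
    mul_ne_zero_iff.mp (ne_zero_of_natDegree_gt (n := 0) (by omega) : P * M ≠ 0)
  rw [natDegree_mul hP₀ hM₀] at hPM
  have hM := two_mul_natDegree_le_of_sq_eq h₄ ha₄ hd₃ le_rfl hx₀
  have hsum : (M + P ^ 2).natDegree = 2 * P.natDegree := by
    rw [natDegree_add_eq_right_of_natDegree_lt (by rw [natDegree_pow]; omega), natDegree_pow]
  have : (W * a₂ + d₂ - x₀ * d₁).natDegree ≤ W.natDegree + 2 :=
    natDegree_mul_add_sub_mul_le le_rfl (by omega) ha₂ hd₁ hd₂ (by omega)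
  rw [← h₂, hsum] at this
  omega

theorem QuarticCoeffRelations.natDegree_bounds
    (h : QuarticCoeffRelations x₀ a₂ a₃ a₄ d₁ d₂ d₃ P W M)
    (ha₂ : a₂.natDegree ≤ 2) (ha₃ : a₃.natDegree = 3) (ha₄ : a₄.natDegree ≤ 3)
    (hd₁ : d₁.natDegree ≤ 1) (hd₂ : d₂.natDegree ≤ 2) (hd₃ : d₃.natDegree ≤ 3) (hW : W ≠ 0) :
    W.natDegree = 0 ∧ P.natDegree ≤ 1 := by
  rcases lt_or_ge W.natDegree P.natDegree with hWP | hPW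
  · have := h.natDegree_le_one_of_lt ha₂ ha₄ hd₁ hd₂ hd₃ hWP
    omega
  · have := h.natDegree_eq_zero_of_le ha₂ ha₃ ha₄ hd₁ hd₂ hd₃ hW hPW
    omega

end Degree

theorem exists_algebraMap_eq_of_sq_eq {k L : Type*} [Field k] [IsAlgClosed k] [Field L]
    [Algebra k L] {r : L} {c : k} (h : r ^ 2 = algebraMap k L c) :
    ∃ r₀ : k, r = algebraMap k L r₀ := by
  obtain ⟨ρ, hρ⟩ := IsAlgClosed.exists_pow_nat_eq c two_pos
  have : (r - algebraMap k L ρ) * (r + algebraMap k L ρ) = 0 := by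
    linear_combination h - congrArg (algebraMap k L) hρ + map_pow (algebraMap k L) ρ 2
  rcases mul_eq_zero.mp this with h | h
  · exact ⟨ρ, sub_eq_zero.mp h⟩
  · exact ⟨-ρ, by rw [map_neg]; linear_combination h⟩

theorem stmt3_general (a2 a3 a4 : Polynomial ℂ)
    (h2 : a2.natDegree = 2) (h3 : a3.natDegree = 3) (h4 : a4.natDegree ≤ 3)
    (x0 y0 : Polynomial ℂ)
    (f : Polynomial (Polynomial ℂ))
    (hf : f = X ^ 3 + C a2 * X ^ 2 + C a3 * X + C a4)
    (r s : RatFunc ℂ) (hr : r ≠ 0)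
    (v : Polynomial (RatFunc ℂ))
    (hv : v = C r * (X - C (algebraMap (Polynomial ℂ) (RatFunc ℂ) x0)) *
        (X - C s) - C (algebraMap (Polynomial ℂ) (RatFunc ℂ) y0))
    (c1 c2 c3 : RatFunc ℂ)
    (u : Polynomial (RatFunc ℂ))
    (hu : u = X ^ 3 + C c1 * X ^ 2 + C c2 * X + C c3)
    (heq : v ^ 2 - f.map (algebraMap (Polynomial ℂ) (RatFunc ℂ)) =
        C r ^ 2 * (X - C (algebraMap (Polynomial ℂ) (RatFunc ℂ) x0)) * u)
    (hupoly : ∃ d1 d2 d3 : Polynomial ℂ,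
        c1 = algebraMap (Polynomial ℂ) (RatFunc ℂ) d1 ∧
        c2 = algebraMap (Polynomial ℂ) (RatFunc ℂ) d2 ∧
        c3 = algebraMap (Polynomial ℂ) (RatFunc ℂ) d3 ∧
        d1.natDegree ≤ 1 ∧ d2.natDegree ≤ 2 ∧ d3.natDegree ≤ 3) :
    (∃ r0 : ℂ, r0 ≠ 0 ∧ r = algebraMap ℂ (RatFunc ℂ) r0) ∧
      ∃ s' : Polynomial ℂ, s'.natDegree ≤ 1 ∧
        s = algebraMap (Polynomial ℂ) (RatFunc ℂ) s' := by
  obtain ⟨d1, d2, d3, rfl, rfl, rfl, hd1, hd2, hd3⟩ := hupoly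
  subst hf hv hu
  simp only [Polynomial.map_add, Polynomial.map_mul, Polynomial.map_pow, map_X, map_C] at heq
  obtain ⟨P, W, M, hP, hW, -, hR⟩ :=
    (quarticCoeffRelations_of_sq_sub_eq hr heq).exists_eq_algebraMap
  have hW₀ : W ≠ 0 := by
    rintro rfl
    exact hr (by simpa using hW.symm)
  obtain ⟨hWdeg, hPdeg⟩ := hR.natDegree_bounds h2.le h3 h4 hd1 hd2 hd3 hW₀
  refine ⟨?_, P - x0, ?_, ?_⟩
  · obtain ⟨w, rfl⟩ := natDegree_eq_zero.mp hWdeg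
    have hr₂ : r ^ 2 = algebraMap ℂ (RatFunc ℂ) w⁻¹ := by
      rw [map_inv₀, IsScalarTower.algebraMap_apply ℂ ℂ[X] (RatFunc ℂ), Polynomial.algebraMap_eq,
        hW, inv_pow, inv_inv]
    obtain ⟨r₀, rfl⟩ := exists_algebraMap_eq_of_sq_eq hr₂
    exact ⟨r₀, by rintro rfl; simp at hr, rfl⟩
  · rw [hR.1, show P - (2 * P + W + d1) = -(P + W + d1) by ring, natDegree_neg]
    exact natDegree_add_le_of_degree_le (natDegree_add_le_of_degree_le hPdeg (by omega)) hd1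
  · rw [map_sub, hP]
    ring

theorem stmt3 (a2 a3 a4 : Polynomial ℂ)
    (h2 : a2.natDegree = 2) (h3 : a3.natDegree = 3) (h4 : a4.natDegree ≤ 3)
    (x0 y0 : Polynomial ℂ)
    (f : Polynomial (Polynomial ℂ))
    (hf : f = X ^ 3 + C a2 * X ^ 2 + C a3 * X + C a4)
    (hxy : y0 ^ 2 = f.eval x0)
    (r s : RatFunc ℂ) (hr : r ≠ 0)
    (v : Polynomial (RatFunc ℂ))
    (hv : v = C r * (X - C (algebraMap (Polynomial ℂ) (RatFunc ℂ) x0)) *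
        (X - C s) - C (algebraMap (Polynomial ℂ) (RatFunc ℂ) y0))
    (c1 c2 c3 : RatFunc ℂ)
    (u : Polynomial (RatFunc ℂ))
    (hu : u = X ^ 3 + C c1 * X ^ 2 + C c2 * X + C c3)
    (heq : v ^ 2 - f.map (algebraMap (Polynomial ℂ) (RatFunc ℂ)) =
        C r ^ 2 * (X - C (algebraMap (Polynomial ℂ) (RatFunc ℂ) x0)) * u)
    (hupoly : ∃ d1 d2 d3 : Polynomial ℂ,
        c1 = algebraMap (Polynomial ℂ) (RatFunc ℂ) d1 ∧
        c2 = algebraMap (Polynomial ℂ) (RatFunc ℂ) d2 ∧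
        c3 = algebraMap (Polynomial ℂ) (RatFunc ℂ) d3 ∧
        d1.natDegree ≤ 1 ∧ d2.natDegree ≤ 2 ∧ d3.natDegree ≤ 3) :
    (∃ r0 : ℂ, r0 ≠ 0 ∧ r = algebraMap ℂ (RatFunc ℂ) r0) ∧
      ∃ s' : Polynomial ℂ, s'.natDegree ≤ 1 ∧
        s = algebraMap (Polynomial ℂ) (RatFunc ℂ) s' :=
  stmt3_general a2 a3 a4 h2 h3 h4 x0 y0 f hf r s hr v hv c1 c2 c3 u hu heq hupoly
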